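/- Let F be an n×n real nonnegative matrix and V an n×n real Metzler and Hurwitz matrix, and let r > ρ(F V⁻¹) be a real number. Then F + rV is Hurwitz, -(F + rV)⁻¹ is entrywise nonnegative, and for every vector z ∈ ℝⁿ with all entries strictly positive, the vector w := -(F + rV)⁻¹ z has all entries strictly positive and satisfies (F + rV) w < 0 entrywise. -/

import Mathlib

/-!
For a Metzler matrix `B`, the resolvent `(t - B)⁻¹` is entrywise nonnegative for large `t`
(Neumann series of the nonnegative matrix `B + s`), and nonnegativity propagates to the left
along every interval of the resolvent set, because the factor `(1 - (v - u) (v - B)⁻¹)⁻¹` in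
`(u - B)⁻¹ = (1 - (v - u) (v - B)⁻¹)⁻¹ (v - B)⁻¹` is a Neumann series for `u` close to `v`.
At `t = 0` this gives `-V⁻¹ ≥ 0`; for `B = -F V⁻¹ ≥ 0` and `t = r > ρ(F V⁻¹)` it gives
`-(F + r V)⁻¹ = -V⁻¹ (r + F V⁻¹)⁻¹ ≥ 0`. Then `w = -(F + r V)⁻¹ 1` is positive with
`(F + r V) w = -1`, and Gershgorin's theorem applied to `D⁻¹ (F + r V) D`, `D = diag w`, puts
the spectrum of the Metzler matrix `F + r V` in the open left half-plane.
-/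

open Matrix

/-- A square real matrix is *Metzler* if all its off-diagonal entries are nonnegative. -/
def IsMetzler {n : ℕ} (A : Matrix (Fin n) (Fin n) ℝ) : Prop :=
  ∀ i j, i ≠ j → 0 ≤ A i j

/-- A square real matrix is *Hurwitz* if every complex eigenvalue has negative real part. -/
def IsHurwitz {n : ℕ} (A : Matrix (Fin n) (Fin n) ℝ) : Prop :=
  ∀ μ ∈ spectrum ℂ (A.map Complex.ofReal), μ.re < 0

/-- The spectral radius of a square real matrix: the maximum modulus of its complex
eigenvalues. -/
noncomputable def specRad {n : ℕ} (A : Matrix (Fin n) (Fin n) ℝ) : ℝ :=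
  sSup {x : ℝ | ∃ μ ∈ spectrum ℂ (A.map Complex.ofReal), x = ‖μ‖}

open Set Filter

namespace Matrix

def IsNonneg {m n R : Type*} [Zero R] [LE R] (M : Matrix m n R) : Prop :=
  ∀ i j, 0 ≤ M i j

variable {l m n : Type*} [Fintype m]

theorem IsNonneg.mul {A : Matrix l m ℝ} {B : Matrix m n ℝ} (hA : A.IsNonneg) (hB : B.IsNonneg) :
    (A * B).IsNonneg := fun i j =>
  Finset.sum_nonneg fun k _ => mul_nonneg (hA i k) (hB k j)

variable [DecidableEq m]

theorem IsNonneg.pow {A : Matrix m m ℝ} (hA : A.IsNonneg) (k : ℕ) : (A ^ k).IsNonneg := by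
  induction k with
  | zero => intro i j; by_cases h : i = j <;> simp [h]
  | succ k ih => rw [pow_succ]; exact ih.mul hA

theorem IsNonneg.mulVec_pos {P : Matrix m m ℝ} (hP : P.IsNonneg) (hPu : IsUnit P) {z : m → ℝ}
    (hz : ∀ i, 0 < z i) (i : m) : 0 < (P *ᵥ z) i := by
  refine (Finset.sum_nonneg fun j _ => mul_nonneg (hP i j) (hz j).le).lt_of_ne fun hzero => ?_
  have hrow : ∀ j, P i j = 0 := fun j =>
    (mul_eq_zero.mp ((Finset.sum_eq_zero_iff_of_nonneg fun j _ =>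
      mul_nonneg (hP i j) (hz j).le).mp hzero.symm j (Finset.mem_univ j))).resolve_right (hz j).ne'
  obtain ⟨Q, hPQ⟩ := hPu.exists_right_inv
  simpa [mul_apply, hrow] using congrFun (congrFun hPQ i) i

end Matrix

theorem ofReal_mem_spectrum_map {m : Type*} [Fintype m] [DecidableEq m] {A : Matrix m m ℝ}
    {t : ℝ} (ht : t ∈ spectrum ℝ A) : (t : ℂ) ∈ spectrum ℂ (A.map Complex.ofReal) := by
  rw [mem_spectrum_iff_isRoot_charpoly] at ht ⊢
  change ((A.map Complex.ofRealHom).charpoly).IsRoot (Complex.ofRealHom t)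
  rw [charpoly_map]
  exact ht.map

section Metzler

variable {n : ℕ}

theorem IsHurwitz.mem_resolventSet {A : Matrix (Fin n) (Fin n) ℝ} (hA : IsHurwitz A) {t : ℝ}
    (ht : 0 ≤ t) : t ∈ resolventSet ℝ A :=
  spectrum.notMem_iff.mp fun hmem =>
    (hA _ (ofReal_mem_spectrum_map hmem)).not_ge (by simpa using ht)

theorem IsHurwitz.isUnit {A : Matrix (Fin n) (Fin n) ℝ} (hA : IsHurwitz A) : IsUnit A := by
  simpa using (hA.mem_resolventSet le_rfl).neg

theorem norm_le_specRad {A : Matrix (Fin n) (Fin n) ℝ} {μ : ℂ}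
    (hμ : μ ∈ spectrum ℂ (A.map Complex.ofReal)) : ‖μ‖ ≤ specRad A :=
  le_csSup (((Matrix.finite_spectrum _).image norm).bddAbove.mono
    (by rintro _ ⟨ν, hν, rfl⟩; exact ⟨ν, hν, rfl⟩)) ⟨μ, hμ, rfl⟩

theorem specRad_nonneg (A : Matrix (Fin n) (Fin n) ℝ) : 0 ≤ specRad A :=
  Real.sSup_nonneg (by rintro _ ⟨μ, -, rfl⟩; exact norm_nonneg μ)

theorem mem_resolventSet_of_specRad_lt_abs {A : Matrix (Fin n) (Fin n) ℝ} {t : ℝ}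
    (ht : specRad A < |t|) : t ∈ resolventSet ℝ A :=
  spectrum.notMem_iff.mp fun hmem =>
    ht.not_ge (by simpa using norm_le_specRad (ofReal_mem_spectrum_map hmem))

theorem Matrix.IsNonneg.isMetzler {A : Matrix (Fin n) (Fin n) ℝ} (hA : A.IsNonneg) :
    IsMetzler A :=
  fun i j _ => hA i j

theorem IsMetzler.exists_isNonneg_add_smul_one {B : Matrix (Fin n) (Fin n) ℝ}
    (hB : IsMetzler B) : ∃ s : ℝ, (B + s • 1).IsNonneg := by
  obtain ⟨s, hs⟩ := (Set.finite_range fun i => -B i i).bddAbove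
  refine ⟨s, fun i j => ?_⟩
  by_cases h : i = j
  · subst h
    simpa [neg_le_iff_add_nonneg'] using hs ⟨i, rfl⟩
  · simpa [h] using hB i j h

theorem IsMetzler.isHurwitz_of_mulVec_neg {A : Matrix (Fin n) (Fin n) ℝ} (hA : IsMetzler A)
    {w : Fin n → ℝ} (hw : ∀ i, 0 < w i) (hAw : ∀ i, (A *ᵥ w) i < 0) : IsHurwitz A := by
  intro μ hμ
  have hw' : ∀ i, (w i : ℂ) ≠ 0 := fun i => Complex.ofReal_ne_zero.mpr (hw i).ne'
  let D : (Matrix (Fin n) (Fin n) ℂ)ˣ :=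
    ⟨diagonal fun i => (w i : ℂ), diagonal fun i => (w i : ℂ)⁻¹, by simp [hw'],
      by simp [hw']⟩
  set C := (D⁻¹).val * A.map Complex.ofReal * D.val
  have hμC : Module.End.HasEigenvalue (toLin' C) μ := by
    rwa [Module.End.hasEigenvalue_iff_mem_spectrum, spectrum_toLin', spectrum.units_conjugate']
  have hC : ∀ i j, C i j = ((A i j * w j / w i : ℝ) : ℂ) := by
    intro i j
    simp only [C, D, Units.inv_mk, mul_diagonal, diagonal_mul, map_apply]
    push_cast
    ring
  obtain ⟨k, hk⟩ := eigenvalue_mem_ball hμC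
  rw [hC, mul_div_cancel_right₀ _ (hw k).ne', Metric.mem_closedBall, Complex.dist_eq] at hk
  have hradius : ∑ j ∈ Finset.univ.erase k, ‖C k j‖
      = ∑ j ∈ Finset.univ.erase k, A k j * w j / w k :=
    Finset.sum_congr rfl fun j hj => by
      rw [hC, Complex.norm_real, Real.norm_of_nonneg (div_nonneg (mul_nonneg
        (hA k j (Finset.ne_of_mem_erase hj).symm) (hw j).le) (hw k).le)]
  have hrow : A k k + ∑ j ∈ Finset.univ.erase k, A k j * w j / w k < 0 := by
    rw [← mul_div_cancel_right₀ (A k k) (hw k).ne',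
      Finset.add_sum_erase _ (fun j => A k j * w j / w k) (Finset.mem_univ k), ← Finset.sum_div]
    exact div_neg_of_neg_of_pos (hAw k) (hw k)
  have hre : μ.re - A k k ≤ ‖μ - (A k k : ℂ)‖ := by
    simpa using Complex.re_le_norm (μ - A k k)
  linarith

end Metzler

section Resolvent

attribute [local instance] Matrix.linftyOpNormedAddCommGroup Matrix.linftyOpNormedSpace
  Matrix.linftyOpNormedRing Matrix.linftyOpNormedAlgebra

variable {m : Type*} [Fintype m] [DecidableEq m] {n : ℕ}

theorem Matrix.IsNonneg.inv_one_sub {N : Matrix m m ℝ} (hN : N.IsNonneg) (h : ‖N‖ < 1) :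
    (1 - N)⁻¹.IsNonneg := by
  intro i j
  have hsum := (summable_geometric_of_norm_lt_one h).hasSum
  rw [geom_series_eq_inverse N h, ← nonsing_inv_eq_ringInverse] at hsum
  exact (Pi.hasSum.mp (Pi.hasSum.mp hsum i) j).nonneg fun k => hN.pow k i j

theorem Matrix.IsNonneg.inv_mul_one_sub {X N : Matrix m m ℝ} (hX : X⁻¹.IsNonneg)
    (hN : N.IsNonneg) (h : ‖N‖ < 1) : (X * (1 - N))⁻¹.IsNonneg := by
  rw [mul_inv_rev]
  exact (hN.inv_one_sub h).mul hX

theorem Matrix.isNonneg_resolvent_of_le {B : Matrix m m ℝ} {u v : ℝ}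
    (hv : v ∈ resolventSet ℝ B) (hRv : (resolvent B v).IsNonneg) (huv : u ≤ v)
    (hnear : (v - u) * ‖resolvent B v‖ < 1) :
    (resolvent B u).IsNonneg := by
  have hfac :
      algebraMap ℝ _ u - B = (algebraMap ℝ _ v - B) * (1 - (v - u) • resolvent B v) := by
    rw [mul_sub, mul_one, mul_smul_comm, resolvent, Ring.mul_inverse_cancel _ hv,
      Algebra.algebraMap_eq_smul_one, Algebra.algebraMap_eq_smul_one]
    module
  rw [resolvent, ← nonsing_inv_eq_ringInverse, hfac]
  refine Matrix.IsNonneg.inv_mul_one_sub ?_ (fun i j => mul_nonneg (sub_nonneg.2 huv) (hRv i j)) ?_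
  · rwa [nonsing_inv_eq_ringInverse]
  · rwa [norm_smul, Real.norm_of_nonneg (sub_nonneg.2 huv)]

theorem IsMetzler.eventually_isNonneg_resolvent {B : Matrix (Fin n) (Fin n) ℝ}
    (hB : IsMetzler B) : ∀ᶠ t : ℝ in atTop, (resolvent B t).IsNonneg := by
  obtain ⟨s, hN⟩ := hB.exists_isNonneg_add_smul_one
  filter_upwards [eventually_gt_atTop (‖B + s • 1‖ - s)] with t ht
  have hc : 0 < t + s := (norm_nonneg _).trans_lt (by linarith)
  have hfac : algebraMap ℝ _ t - B
      = ((t + s) • 1 : Matrix (Fin n) (Fin n) ℝ) * (1 - (t + s)⁻¹ • (B + s • 1)) := by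
    rw [smul_mul_assoc, one_mul, smul_sub, smul_smul, mul_inv_cancel₀ hc.ne', one_smul,
      Algebra.algebraMap_eq_smul_one]
    module
  rw [resolvent, ← nonsing_inv_eq_ringInverse, hfac]
  refine Matrix.IsNonneg.inv_mul_one_sub ?_ (fun i j => mul_nonneg (inv_nonneg.2 hc.le) (hN i j)) ?_
  · rw [inv_eq_left_inv (B := (t + s)⁻¹ • 1)
      (by rw [smul_mul_smul, inv_mul_cancel₀ hc.ne', one_mul, one_smul])]
    intro i j
    by_cases h : i = j <;> simp [h, hc.le]
  · rw [norm_smul, Real.norm_of_nonneg (inv_nonneg.2 hc.le), inv_mul_lt_iff₀ hc, mul_one]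
    linarith

theorem IsMetzler.isNonneg_resolvent {B : Matrix (Fin n) (Fin n) ℝ} (hB : IsMetzler B)
    {t₀ : ℝ} (hρ : ∀ t, t₀ ≤ t → t ∈ resolventSet ℝ B) {t : ℝ} (ht : t₀ ≤ t) :
    (resolvent B t).IsNonneg := by
  obtain ⟨T, hT, htT⟩ := (hB.eventually_isNonneg_resolvent.and (eventually_ge_atTop t)).exists
  have hcont : ContinuousOn (resolvent B) (Icc t T) := fun u hu =>
    (spectrum.hasDerivAt_resolvent_const_left (hρ u (ht.trans hu.1))).continuousAt
      |>.continuousWithinAt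
  have hclosed : IsClosed ({u | (resolvent B u).IsNonneg} ∩ Icc t T) := by
    rw [inter_comm]
    refine hcont.preimage_isClosed_of_isClosed (t := {M | M.IsNonneg}) isClosed_Icc ?_
    simp only [Matrix.IsNonneg, ofPred_forall]
    exact isClosed_iInter fun i => isClosed_iInter fun j =>
      isClosed_le continuous_const ((continuous_apply j).comp (continuous_apply i))
  refine hclosed.Icc_subset_of_forall_exists_lt hT ?_ ⟨le_rfl, htT⟩
  rintro x ⟨hx, htx, -⟩ y hyx
  set ε := (‖resolvent B x‖ + 1)⁻¹
  have hε : 0 < ε := by positivity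
  have hεR : ε * ‖resolvent B x‖ < 1 := by
    rw [inv_mul_lt_iff₀ (by positivity)]
    linarith
  refine ⟨max y (x - ε), Matrix.isNonneg_resolvent_of_le (hρ x (ht.trans htx.le)) hx
    (max_le hyx.le (by linarith)) ?_, le_max_left _ _, max_lt hyx (by linarith)⟩
  calc (x - max y (x - ε)) * ‖resolvent B x‖ ≤ ε * ‖resolvent B x‖ :=
        mul_le_mul_of_nonneg_right (by linarith [le_max_right y (x - ε)]) (norm_nonneg _)
    _ < 1 := hεR

theorem IsMetzler.isNonneg_neg_inv {A : Matrix (Fin n) (Fin n) ℝ} (hM : IsMetzler A)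
    (hH : IsHurwitz A) : (-A⁻¹).IsNonneg := by
  have hR := hM.isNonneg_resolvent (fun _ => hH.mem_resolventSet) le_rfl
  rwa [resolvent, map_zero, zero_sub, ← nonsing_inv_eq_ringInverse, inv_eq_left_inv (B := -A⁻¹)
    (by rw [neg_mul_neg, nonsing_inv_mul _ ((isUnit_iff_isUnit_det A).mp hH.isUnit)])] at hR

end Resolvent

/-- For `F ≥ 0`, `V` Metzler and Hurwitz, and `r > ρ(F V⁻¹)`: `F + rV` is Hurwitz,
`-(F + rV)⁻¹ ≥ 0` entrywise, and for every `z > 0` the vector `w = -(F + rV)⁻¹ z`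
is entrywise positive and satisfies `(F + rV) w < 0` entrywise. -/
theorem hurwitz_and_pos_vec_of_specRad_lt {n : ℕ} (F V : Matrix (Fin n) (Fin n) ℝ)
    (hF : ∀ i j, 0 ≤ F i j) (hVmetzler : IsMetzler V) (hVhurwitz : IsHurwitz V)
    (r : ℝ) (hr : specRad (F * V⁻¹) < r) :
    IsHurwitz (F + r • V) ∧ (∀ i j, 0 ≤ (-((F + r • V)⁻¹)) i j) ∧
      ∀ z : Fin n → ℝ, (∀ i, 0 < z i) →
        (∀ i, 0 < ((-((F + r • V)⁻¹)) *ᵥ z) i) ∧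
        ∀ i, ((F + r • V) *ᵥ ((-((F + r • V)⁻¹)) *ᵥ z)) i < 0 := by
  have hVinv : (-V⁻¹).IsNonneg := hVmetzler.isNonneg_neg_inv hVhurwitz
  have hρ : ∀ t, r ≤ t → t ∈ resolventSet ℝ (F * -V⁻¹) := fun t ht => by
    rw [mul_neg, resolventSet_neg]
    exact mem_resolventSet_of_specRad_lt_abs (by rw [abs_neg]; linarith [le_abs_self t])
  have hG : (resolvent (F * -V⁻¹) r).IsNonneg :=
    (Matrix.IsNonneg.mul hF hVinv).isMetzler.isNonneg_resolvent hρ le_rfl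
  have hfac : F + r • V = (algebraMap ℝ _ r - F * -V⁻¹) * V := by
    rw [sub_mul, Algebra.algebraMap_eq_smul_one, smul_one_mul, mul_neg, neg_mul, sub_neg_eq_add,
      mul_assoc, nonsing_inv_mul _ ((isUnit_iff_isUnit_det V).mp hVhurwitz.isUnit), mul_one,
      add_comm]
  have hunit : IsUnit (F + r • V) := hfac ▸ (hρ r le_rfl).mul hVhurwitz.isUnit
  have hP : (-(F + r • V)⁻¹).IsNonneg := by
    rw [hfac, Matrix.mul_inv_rev, ← neg_mul, nonsing_inv_eq_ringInverse (_ - _)]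
    exact hVinv.mul hG
  have hpos : ∀ z : Fin n → ℝ, (∀ i, 0 < z i) → ∀ i, 0 < (-(F + r • V)⁻¹ *ᵥ z) i :=
    fun z => hP.mulVec_pos (isUnit_nonsing_inv_iff.mpr hunit).neg
  have hAP : ∀ z, (F + r • V) *ᵥ (-(F + r • V)⁻¹ *ᵥ z) = -z := fun z => by
    rw [mulVec_mulVec, mul_neg, mul_nonsing_inv _ ((isUnit_iff_isUnit_det _).mp hunit), neg_mulVec,
      one_mulVec]
  have hmetzler : IsMetzler (F + r • V) := fun i j hij =>
    add_nonneg (hF i j) (mul_nonneg ((specRad_nonneg _).trans hr.le) (hVmetzler i j hij))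
  refine ⟨hmetzler.isHurwitz_of_mulVec_neg (hpos _ fun _ => one_pos) (by simp [hAP]), hP,
    fun z hz => ⟨hpos z hz, by simp [hAP, hz]⟩⟩
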